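/- arXiv:math/0406041 — 3 statements merged into one kernel-verified Lean document; each statement's English description precedes it below -/
import Mathlib

section
/- Let H be a complex Hilbert space, let S₀ be a linear operator on H, let a be a bounded multiplication-type (linear) operator on H, and for μ ∈ ℝ let S_μ := S₀ + μ·a. Fix α > 0 and define the block operator A_α on H × H by A_α(ψ₁, ψ₂) = (ψ₂, -S₀ψ₁ - α·a·ψ₂). Then for every μ ∈ ℝ, the number -(μ/α)² is an eigenvalue of S_μ if and only if μ/α is an eigenvalue of A_α. -/
/-!
The first component of an eigenvector of the first-order system `Ψ' = A_α Ψ` determines the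
second one, `ψ₂ = λ ψ₁`; substituting this into the second row turns `A_α Ψ = λ Ψ` into the
quadratic eigenvalue problem `S₀ ψ₁ + α λ a ψ₁ = -λ² ψ₁`, which for `λ = μ / α` reads
`S_μ ψ₁ = -(μ/α)² ψ₁`.
-/

section QuadraticLinearization

variable {R M : Type*} [CommRing R] [AddCommGroup M] [Module R M]

theorem companion_eigen_iff (S b : M →ₗ[R] M) (c l : R) (ψ₁ ψ₂ : M) :
    (ψ₂, -S ψ₁ - c • b ψ₂) = l • (ψ₁, ψ₂) ↔
      ψ₂ = l • ψ₁ ∧ S ψ₁ + (c * l) • b ψ₁ = -(l ^ 2) • ψ₁ := by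
  simp only [Prod.smul_mk, Prod.mk.injEq]
  refine and_congr_right fun h₂ => ?_
  subst h₂
  rw [map_smul, smul_smul, smul_smul, sq, neg_smul]
  constructor <;> intro h
  · rw [← h]; abel
  · rw [← neg_neg ((l * l) • ψ₁), ← h]; abel

theorem exists_companion_eigenvector_iff (S b : M →ₗ[R] M) (c l : R) :
    (∃ ψ : M, ψ ≠ 0 ∧ S ψ + (c * l) • b ψ = -(l ^ 2) • ψ) ↔
      ∃ Ψ : M × M, Ψ ≠ 0 ∧ (Ψ.2, -S Ψ.1 - c • b Ψ.2) = l • Ψ := by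
  constructor
  · rintro ⟨ψ, hψ, heig⟩
    exact ⟨(ψ, l • ψ), fun h => hψ (congrArg Prod.fst h),
      (companion_eigen_iff S b c l ψ (l • ψ)).mpr ⟨rfl, heig⟩⟩
  · rintro ⟨⟨ψ₁, ψ₂⟩, hΨ, heig⟩
    obtain ⟨rfl, heig₁⟩ := (companion_eigen_iff S b c l ψ₁ ψ₂).mp heig
    refine ⟨ψ₁, fun h => hΨ ?_, heig₁⟩
    simp [h]

end QuadraticLinearization

/-- `-(μ/α)²` is an eigenvalue of `S_μ = S₀ + μ a` iff `μ/α` is an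
eigenvalue of the block damped-wave operator `A_α (ψ₁,ψ₂) = (ψ₂, -S₀ψ₁ - α a ψ₂)`. -/
theorem stmt0 {H : Type*} [NormedAddCommGroup H] [InnerProductSpace ℂ H]
    (S₀ : H →ₗ[ℂ] H) (a : H →L[ℂ] H) (α μ : ℝ) (hα : 0 < α) :
    (∃ ψ : H, ψ ≠ 0 ∧ S₀ ψ + (μ : ℂ) • a ψ = (-((μ / α : ℝ) ^ 2) : ℂ) • ψ) ↔
    (∃ Ψ : H × H, Ψ ≠ 0 ∧
      (Ψ.2, -S₀ Ψ.1 - (α : ℂ) • a Ψ.2) = ((μ / α : ℝ) : ℂ) • Ψ) := by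
  have hμ : (μ : ℂ) = (α : ℂ) * ((μ / α : ℝ) : ℂ) := by
    push_cast
    field_simp [Complex.ofReal_ne_zero.mpr hα.ne']
  rw [hμ]
  exact exists_companion_eigenvector_iff S₀ a.toLinearMap α (μ / α : ℝ)
end

section
/- Let f : ℝ → ℝ be continuous with f(μ)/μ → c₊ as μ → +∞ where c₊ < 0, and suppose f(0) > 0. Then for every sufficiently large α > 0 there exist at least two distinct points μ > 0 with f(μ) = -(μ/α)². More precisely, there exists α₀ > 0 such that for all α > α₀ the equation f(μ) = -(μ/α)² has at least two solutions in (0, ∞). -/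
/-!
Put `g μ = f μ + (μ / α)²`, whose zeros are the solutions sought. Since `f μ / μ → c₊ < 0`,
`f` is negative at some `M > 0`, and once `α` is so large that `(M / α)² < -f M` we get
`g M < 0 < g 0`. On the other hand `g μ = μ (f μ / μ + μ / α²) → +∞`, because the quadratic
term beats the at most linear decay of `f`. The intermediate value theorem then gives one zero
in `(0, M)` and another in `(M, ∞)`.
-/

open Filter Topology Set

theorem exists_zero_Ioo_and_zero_Ioi {g : ℝ → ℝ} (hg : Continuous g) {a M : ℝ} (haM : a < M)
    (hga : 0 < g a) (hgM : g M < 0) (htop : Tendsto g atTop atTop) :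
    (∃ μ ∈ Ioo a M, g μ = 0) ∧ ∃ μ ∈ Ioi M, g μ = 0 := by
  obtain ⟨N, hgN, hMN⟩ := ((htop.eventually_gt_atTop 0).and (eventually_gt_atTop M)).exists
  refine ⟨intermediate_value_Ioo' haM.le hg.continuousOn ⟨hgM, hga⟩, ?_⟩
  obtain ⟨μ, hμ, hgμ⟩ := intermediate_value_Ioo hMN.le hg.continuousOn ⟨hgM, hgN⟩
  exact ⟨μ, hμ.1, hgμ⟩

theorem eventually_neg_of_tendsto_div_atTop {f : ℝ → ℝ} {c : ℝ} (hc : c < 0)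
    (hlim : Tendsto (fun μ => f μ / μ) atTop (𝓝 c)) : ∀ᶠ μ in atTop, f μ < 0 := by
  filter_upwards [hlim.eventually_lt_const hc, eventually_gt_atTop 0] with μ hneg hμ
  simpa using (div_lt_iff₀ hμ).1 hneg

theorem tendsto_add_sq_div_atTop {f : ℝ → ℝ} {c α : ℝ} (hα : α ≠ 0)
    (hlim : Tendsto (fun μ => f μ / μ) atTop (𝓝 c)) :
    Tendsto (fun μ => f μ + (μ / α) ^ 2) atTop atTop := by
  have hprod : Tendsto (fun μ => μ * (f μ / μ + μ / α ^ 2)) atTop atTop :=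
    tendsto_id.atTop_mul_atTop₀ (hlim.add_atTop (tendsto_id.atTop_div_const (by positivity)))
  refine hprod.congr' ?_
  filter_upwards [eventually_gt_atTop 0] with μ hμ
  field_simp

/-- if `f` is continuous, `f(0) > 0`, and `f(μ)/μ → cp < 0` as
`μ → +∞`, then for all sufficiently large `α > 0` the equation
`f(μ) = -(μ/α)²` has at least two solutions in `(0, ∞)`. -/
theorem stmt4 (f : ℝ → ℝ) (hf : Continuous f) (cp : ℝ) (hc : cp < 0)
    (hlim : Tendsto (fun μ => f μ / μ) atTop (nhds cp)) (h0 : 0 < f 0) :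
    ∃ α₀ > (0 : ℝ), ∀ α > α₀, ∃ μ₁ μ₂ : ℝ, 0 < μ₁ ∧ 0 < μ₂ ∧ μ₁ ≠ μ₂ ∧
      f μ₁ = -(μ₁ / α) ^ 2 ∧ f μ₂ = -(μ₂ / α) ^ 2 := by
  obtain ⟨M, hfM, hM⟩ :=
    ((eventually_neg_of_tendsto_div_atTop hc hlim).and (eventually_gt_atTop 0)).exists
  have hsmall : ∀ᶠ α in atTop, 0 < α ∧ (M / α) ^ 2 < -f M := by
    have hto0 : Tendsto (fun α : ℝ => (M / α) ^ 2) atTop (𝓝 0) := by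
      simpa using ((tendsto_const_nhds (x := M)).div_atTop tendsto_id).pow 2
    exact (eventually_gt_atTop 0).and (hto0.eventually_lt_const (neg_pos.2 hfM))
  obtain ⟨a, ha⟩ := eventually_atTop.1 hsmall
  refine ⟨max a 1, by positivity, fun α hα => ?_⟩
  obtain ⟨hα0, hαM⟩ := ha α (le_max_left a 1 |>.trans hα.le)
  obtain ⟨⟨μ₁, ⟨hμ₁, hμ₁M⟩, hg₁⟩, μ₂, hMμ₂, hg₂⟩ :=
    exists_zero_Ioo_and_zero_Ioi (g := fun μ => f μ + (μ / α) ^ 2) (by fun_prop) hM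
      (by simpa using h0) (by linarith) (tendsto_add_sq_div_atTop hα0.ne' hlim)
  exact ⟨μ₁, μ₂, hμ₁, hM.trans hMμ₂, (hμ₁M.trans hMμ₂).ne, by linarith, by linarith⟩
end

section
/- Let S₀ be a self-adjoint operator on a Hilbert space H, a a bounded self-adjoint operator, μ ∈ ℝ, α > 0, and λ := μ/α. Suppose (ψₙ) ⊆ D(S₀) is a sequence of unit vectors with ψₙ ⇀ 0 weakly and (S₀ + μa + λ²)ψₙ → 0. Define Ψₙ := (ψₙ, λψₙ) in the product Hilbert space H × H, and let A_α(ψ₁,ψ₂) := (ψ₂, -S₀ψ₁ - α a ψ₂). Then ‖Ψₙ‖ ≥ 1, (A_α - λ)Ψₙ → 0, and Ψₙ ⇀ 0 weakly in H × H; hence Ψₙ/‖Ψₙ‖ is a singular (Weyl) sequence for A_α at λ. -/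
open Filter

/-- from a Weyl sequence `(ψₙ)` for `S_μ = S₀ + μa` at `-λ²`
(`λ = μ/α`), the vectors `Ψₙ := (ψₙ, λψₙ)` satisfy `‖Ψₙ‖ ≥ 1` (for the norm
`‖(ψ₁,ψ₂)‖² = ‖ψ₁‖² + ‖ψ₂‖²`), `(A_α - λ)Ψₙ → 0` (the first component of the
difference vanishing identically) and `Ψₙ ⇀ 0` weakly, i.e. `Ψₙ/‖Ψₙ‖` is a
singular sequence for the damped-wave operator `A_α` at `λ`. -/
theorem stmt12 {H : Type*} [NormedAddCommGroup H] [InnerProductSpace ℂ H] [CompleteSpace H]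
    (S₀ : H →ₗ[ℂ] H) (hS₀sym : ∀ ψ φ : H, (inner ℂ (S₀ ψ) φ : ℂ) = inner ℂ ψ (S₀ φ))
    (a : H →L[ℂ] H) (ha : IsSelfAdjoint a)
    (μ α : ℝ) (hα : 0 < α) (ψ : ℕ → H)
    (hnorm : ∀ n, ‖ψ n‖ = 1)
    (hweak : ∀ φ : H, Tendsto (fun n => (inner ℂ φ (ψ n) : ℂ)) atTop (nhds 0))
    (hsing : Tendsto
      (fun n => ‖S₀ (ψ n) + (μ : ℂ) • a (ψ n) + (((μ / α : ℝ) : ℂ) ^ 2) • ψ n‖)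
      atTop (nhds 0)) :
    (∀ n, 1 ≤ Real.sqrt (‖ψ n‖ ^ 2 + ‖(((μ / α : ℝ) : ℂ)) • ψ n‖ ^ 2)) ∧
    (∀ n, ((((μ / α : ℝ) : ℂ)) • ψ n) - (((μ / α : ℝ) : ℂ)) • ψ n = 0) ∧
    Tendsto (fun n =>
      ‖(-S₀ (ψ n) - (α : ℂ) • a ((((μ / α : ℝ) : ℂ)) • ψ n)) -
        (((μ / α : ℝ) : ℂ)) • ((((μ / α : ℝ) : ℂ)) • ψ n)‖) atTop (nhds 0) ∧
    (∀ φ₁ φ₂ : H, Tendsto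
      (fun n => (inner ℂ φ₁ (ψ n) : ℂ) + (inner ℂ φ₂ ((((μ / α : ℝ) : ℂ)) • ψ n) : ℂ))
      atTop (nhds 0)) := by
  refine ⟨fun n => ?_, fun n => sub_self _, ?_, fun φ₁ φ₂ => ?_⟩
  · have h1 : (1:ℝ) ≤ ‖ψ n‖ ^ 2 + ‖(((μ / α : ℝ) : ℂ)) • ψ n‖ ^ 2 := by
      have := hnorm n
      nlinarith [sq_nonneg ‖(((μ / α : ℝ) : ℂ)) • ψ n‖]
    calc (1:ℝ) = Real.sqrt 1 := Real.sqrt_one.symm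
    _ ≤ _ := Real.sqrt_le_sqrt h1
  · have key : ∀ n, (-S₀ (ψ n) - (α : ℂ) • a ((((μ / α : ℝ) : ℂ)) • ψ n)) -
        (((μ / α : ℝ) : ℂ)) • ((((μ / α : ℝ) : ℂ)) • ψ n)
        = -(S₀ (ψ n) + (μ : ℂ) • a (ψ n) + (((μ / α : ℝ) : ℂ) ^ 2) • ψ n) := by
      intro n
      have hαμ : (α : ℂ) * (((μ / α : ℝ) : ℂ)) = (μ : ℂ) := by
        have hα' : (α : ℂ) ≠ 0 := by exact_mod_cast hα.ne'
        push_cast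
        field_simp
      rw [map_smul, smul_smul, smul_smul, hαμ, ← sq]
      abel
    simpa only [key, norm_neg] using hsing
  · have h1 := hweak φ₁
    have h2 : Tendsto (fun n => (inner ℂ φ₂ ((((μ / α : ℝ) : ℂ)) • ψ n) : ℂ)) atTop (nhds 0) := by
      have := (hweak φ₂).const_mul (((μ / α : ℝ) : ℂ))
      simpa [inner_smul_right] using this
    simpa using h1.add h2
end
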